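/- arXiv:2007.01040 — 3 statements merged into one kernel-verified Lean document; each statement's English description precedes it below -/
import Mathlib

section
/- Let π : M → N be a Riemannian submersion and X, Y vector fields on N with horizontal lifts X‾, Y‾. Then the horizontal part of ∇_{X‾}Y‾ equals the horizontal lift of ∇_X Y; equivalently, ∇_{X‾}Y‾ = (∇_X Y)‾ + (1/2)[X‾, Y‾]^V, where V denotes the projection onto the vertical distribution. -/
open ContinuousLinearMap
noncomputable section
local notation "⟪" x ", " y "⟫" => inner (𝕜 := ℝ) x y
set_option linter.unusedSectionVars false

variable {E F : Type*} [NormedAddCommGroup E] [InnerProductSpace ℝ E]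
  [NormedAddCommGroup F] [InnerProductSpace ℝ F]
  [FiniteDimensional ℝ E] [FiniteDimensional ℝ F]

noncomputable def adjCLM (E F : Type*) [NormedAddCommGroup E] [InnerProductSpace ℝ E]
    [NormedAddCommGroup F] [InnerProductSpace ℝ F]
    [FiniteDimensional ℝ E] [FiniteDimensional ℝ F] :
    (E →L[ℝ] F) →L[ℝ] (F →L[ℝ] E) :=
  LinearMap.mkContinuous
    { toFun := fun T => ContinuousLinearMap.adjoint T
      map_add' := fun T S => by simp
      map_smul' := fun c T => by simp }
    1 (fun T => by simp [ContinuousLinearMap.adjoint.norm_map])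

@[simp] lemma adjCLM_apply (T : E →L[ℝ] F) : adjCLM E F T = ContinuousLinearMap.adjoint T := rfl

lemma adj_mem_orth (T : E →L[ℝ] F) (y : F) :
    ContinuousLinearMap.adjoint T y ∈ (LinearMap.ker (T : E →ₗ[ℝ] F))ᗮ := by
  intro u hu
  rw [LinearMap.mem_ker, ContinuousLinearMap.coe_coe] at hu
  rw [real_inner_comm, ContinuousLinearMap.adjoint_inner_left, hu, inner_zero_right]

lemma polar_iso {T : E →L[ℝ] F} (hiso : ∀ w ∈ (LinearMap.ker (T : E →ₗ[ℝ] F))ᗮ, ‖T w‖ = ‖w‖)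
    {a b : E} (ha : a ∈ (LinearMap.ker (T : E →ₗ[ℝ] F))ᗮ) (hb : b ∈ (LinearMap.ker (T : E →ₗ[ℝ] F))ᗮ) :
    ⟪T a, T b⟫ = ⟪a, b⟫ := by
  have hab : a + b ∈ (LinearMap.ker (T : E →ₗ[ℝ] F))ᗮ := Submodule.add_mem _ ha hb
  rw [real_inner_eq_norm_add_mul_self_sub_norm_mul_self_sub_norm_mul_self_div_two,
    real_inner_eq_norm_add_mul_self_sub_norm_mul_self_sub_norm_mul_self_div_two (x := a),
    ← map_add, hiso _ hab, hiso _ ha, hiso _ hb]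

lemma lift_unique {T : E →L[ℝ] F} (hiso : ∀ w ∈ (LinearMap.ker (T : E →ₗ[ℝ] F))ᗮ, ‖T w‖ = ‖w‖)
    {u : E} (hu : u ∈ (LinearMap.ker (T : E →ₗ[ℝ] F))ᗮ) :
    ContinuousLinearMap.adjoint T (T u) = u := by
  apply ext_inner_right ℝ
  intro w
  have hw1 := Submodule.sub_starProjection_mem_orthogonal (K := (LinearMap.ker (T : E →ₗ[ℝ] F))ᗮ) w
  rw [Submodule.orthogonal_orthogonal] at hw1
  have h2 : T w = T (Submodule.orthogonalProjectionOnto (LinearMap.ker (T : E →ₗ[ℝ] F))ᗮ w : E) := by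
    have h3 : T (w - (Submodule.orthogonalProjectionOnto (LinearMap.ker (T : E →ₗ[ℝ] F))ᗮ w : E)) = 0 :=
      LinearMap.mem_ker.mp hw1
    rw [map_sub, sub_eq_zero] at h3
    exact h3
  rw [ContinuousLinearMap.adjoint_inner_left, h2,
    polar_iso hiso hu (Submodule.orthogonalProjectionOnto (LinearMap.ker (T : E →ₗ[ℝ] F))ᗮ w).2]
  have h4 : ⟪u, w - (Submodule.orthogonalProjectionOnto (LinearMap.ker (T : E →ₗ[ℝ] F))ᗮ w : E)⟫ = 0 := by
    rw [real_inner_comm]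
    exact (Submodule.mem_orthogonal _ _).mp hu _ hw1
  rw [inner_sub_right] at h4
  linarith

lemma right_inv {T : E →L[ℝ] F} (hsurj : Function.Surjective T)
    (hiso : ∀ w ∈ (LinearMap.ker (T : E →ₗ[ℝ] F))ᗮ, ‖T w‖ = ‖w‖) (y : F) :
    T (ContinuousLinearMap.adjoint T y) = y := by
  obtain ⟨u, hu⟩ := hsurj y
  set h : E := (Submodule.orthogonalProjectionOnto (LinearMap.ker (T : E →ₗ[ℝ] F))ᗮ u : E) with hh
  have hw1 := Submodule.sub_starProjection_mem_orthogonal (K := (LinearMap.ker (T : E →ₗ[ℝ] F))ᗮ) u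
  rw [Submodule.orthogonal_orthogonal] at hw1
  have hTh : T h = y := by
    have h3 : T (u - h) = 0 := LinearMap.mem_ker.mp hw1
    rw [map_sub, sub_eq_zero] at h3
    rw [← h3, hu]
  rw [← hTh, lift_unique hiso (Submodule.orthogonalProjectionOnto (LinearMap.ker (T : E →ₗ[ℝ] F))ᗮ u).2]
end

noncomputable section Main
open ContinuousLinearMap
local notation "⟪" x ", " y "⟫" => inner (𝕜 := ℝ) x y

variable {E F : Type*} [NormedAddCommGroup E] [InnerProductSpace ℝ E]
  [NormedAddCommGroup F] [InnerProductSpace ℝ F]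
  [FiniteDimensional ℝ E] [FiniteDimensional ℝ F]

section pieces
variable (π : E → F) (p : E)

-- derivative of the adjoint family applied to a fixed vector
lemma adj_deriv (hπ : ContDiff ℝ (⊤ : ℕ∞) π) (y : F) :
    HasFDerivAt (fun q => ContinuousLinearMap.adjoint (fderiv ℝ π q) y)
      (((adjCLM E F).comp (fderiv ℝ (fderiv ℝ π) p)).flip y) p := by
  have h𝒜 : ContDiff ℝ (⊤ : ℕ∞) (fderiv ℝ π) := hπ.fderiv_right (by simp)
  have hDd : HasFDerivAt (fderiv ℝ π) (fderiv ℝ (fderiv ℝ π) p) p :=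
    ((h𝒜.differentiable (by simp)) p).hasFDerivAt
  have hadj : HasFDerivAt (fun q => adjCLM E F (fderiv ℝ π q))
      ((adjCLM E F).comp (fderiv ℝ (fderiv ℝ π) p)) p :=
    (adjCLM E F).hasFDerivAt.comp p hDd
  have h := hadj.clm_apply (hasFDerivAt_const y p)
  simpa using h

-- the key differentiated identity (∗∗):  A ((D v)† y) = -(D v) (A† y)
lemma star_id (hπ : ContDiff ℝ (⊤ : ℕ∞) π)
    (hAA : ∀ q y, fderiv ℝ π q (ContinuousLinearMap.adjoint (fderiv ℝ π q) y) = y)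
    (y : F) (v : E) :
    fderiv ℝ π p (ContinuousLinearMap.adjoint (fderiv ℝ (fderiv ℝ π) p v) y)
      = -(fderiv ℝ (fderiv ℝ π) p v) (ContinuousLinearMap.adjoint (fderiv ℝ π p) y) := by
  have h𝒜 : ContDiff ℝ (⊤ : ℕ∞) (fderiv ℝ π) := hπ.fderiv_right (by simp)
  have hDd : HasFDerivAt (fderiv ℝ π) (fderiv ℝ (fderiv ℝ π) p) p :=
    ((h𝒜.differentiable (by simp)) p).hasFDerivAt
  have h1 := hDd.clm_apply (adj_deriv π p hπ y)
  have hconst : (fun q => fderiv ℝ π q (ContinuousLinearMap.adjoint (fderiv ℝ π q) y))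
      = fun _ => y := funext (fun q => hAA q y)
  rw [hconst] at h1
  have h2 := h1.unique (hasFDerivAt_const y p)
  have h3 := DFunLike.congr_fun h2 v
  simp only [ContinuousLinearMap.add_apply, ContinuousLinearMap.comp_apply,
    ContinuousLinearMap.flip_apply, ContinuousLinearMap.zero_apply, adjCLM_apply] at h3
  exact eq_neg_of_add_eq_zero_left h3

-- derivative of a horizontal lift
lemma lift_deriv (hπ : ContDiff ℝ (⊤ : ℕ∞) π) (Y : F → F) (hY : ContDiff ℝ (⊤ : ℕ∞) Y) :
    HasFDerivAt (fun q => ContinuousLinearMap.adjoint (fderiv ℝ π q) (Y (π q)))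
      ((ContinuousLinearMap.adjoint (fderiv ℝ π p)).comp
          ((fderiv ℝ Y (π p)).comp (fderiv ℝ π p)) +
        (((adjCLM E F).comp (fderiv ℝ (fderiv ℝ π) p)).flip (Y (π p)))) p := by
  have h𝒜 : ContDiff ℝ (⊤ : ℕ∞) (fderiv ℝ π) := hπ.fderiv_right (by simp)
  have hDd : HasFDerivAt (fderiv ℝ π) (fderiv ℝ (fderiv ℝ π) p) p :=
    ((h𝒜.differentiable (by simp)) p).hasFDerivAt
  have hadj : HasFDerivAt (fun q => adjCLM E F (fderiv ℝ π q))
      ((adjCLM E F).comp (fderiv ℝ (fderiv ℝ π) p)) p :=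
    (adjCLM E F).hasFDerivAt.comp p hDd
  have hYπ : HasFDerivAt (fun q => Y (π q)) ((fderiv ℝ Y (π p)).comp (fderiv ℝ π p)) p :=
    ((hY.differentiable (by simp) (π p)).hasFDerivAt).comp p
      ((hπ.differentiable (by simp) p).hasFDerivAt)
  have h := hadj.clm_apply hYπ
  simpa using h

end pieces
end Main

local notation "⟪" x ", " y "⟫" => inner (𝕜 := ℝ) x y

set_option maxHeartbeats 1000000

/-- O'Neill's formula for a Riemannian submersion `π : M → N` (here between Euclidean
model spaces, where the Levi-Civita connection is `∇_X Y = DY(X)`): if `X̄, Ȳ` are the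
horizontal lifts of vector fields `X, Y` on `N` and `Z̄` is the horizontal lift of
`∇_X Y`, then the horizontal part of `∇_{X̄}Ȳ` is `Z̄`; equivalently
`∇_{X̄}Ȳ = (∇_X Y)‾ + (1/2)[X̄, Ȳ]^V`, `V` the projection onto the vertical
distribution `ker dπ`. -/
theorem stmt_8 {m k : ℕ}
    (π : EuclideanSpace ℝ (Fin m) → EuclideanSpace ℝ (Fin k))
    (hπ : ContDiff ℝ (⊤ : ℕ∞) π)
    (hsurj : ∀ p, Function.Surjective (fderiv ℝ π p))
    (hiso : ∀ p, ∀ w ∈ (LinearMap.ker (fderiv ℝ π p : EuclideanSpace ℝ (Fin m) →ₗ[ℝ] EuclideanSpace ℝ (Fin k)))ᗮ, ‖fderiv ℝ π p w‖ = ‖w‖)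
    (X Y : EuclideanSpace ℝ (Fin k) → EuclideanSpace ℝ (Fin k))
    (hX : ContDiff ℝ (⊤ : ℕ∞) X) (hY : ContDiff ℝ (⊤ : ℕ∞) Y)
    (Xb Yb Zb : EuclideanSpace ℝ (Fin m) → EuclideanSpace ℝ (Fin m))
    (hXb : ∀ p, Xb p ∈ (LinearMap.ker (fderiv ℝ π p : EuclideanSpace ℝ (Fin m) →ₗ[ℝ] EuclideanSpace ℝ (Fin k)))ᗮ ∧ fderiv ℝ π p (Xb p) = X (π p))
    (hYb : ∀ p, Yb p ∈ (LinearMap.ker (fderiv ℝ π p : EuclideanSpace ℝ (Fin m) →ₗ[ℝ] EuclideanSpace ℝ (Fin k)))ᗮ ∧ fderiv ℝ π p (Yb p) = Y (π p))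
    (hZb : ∀ p, Zb p ∈ (LinearMap.ker (fderiv ℝ π p : EuclideanSpace ℝ (Fin m) →ₗ[ℝ] EuclideanSpace ℝ (Fin k)))ᗮ ∧
      fderiv ℝ π p (Zb p) = fderiv ℝ Y (π p) (X (π p)))
    (hXbs : ContDiff ℝ (⊤ : ℕ∞) Xb) (hYbs : ContDiff ℝ (⊤ : ℕ∞) Yb) :
    ∀ p,
      ((Submodule.orthogonalProjectionOnto (LinearMap.ker (fderiv ℝ π p :
          EuclideanSpace ℝ (Fin m) →ₗ[ℝ] EuclideanSpace ℝ (Fin k)))ᗮ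
          (fderiv ℝ Yb p (Xb p)) : EuclideanSpace ℝ (Fin m)) = Zb p) ∧
      fderiv ℝ Yb p (Xb p) = Zb p + (1/2 : ℝ) •
        (Submodule.orthogonalProjectionOnto (LinearMap.ker (fderiv ℝ π p :
          EuclideanSpace ℝ (Fin m) →ₗ[ℝ] EuclideanSpace ℝ (Fin k)))
          (fderiv ℝ Yb p (Xb p) - fderiv ℝ Xb p (Yb p)) : EuclideanSpace ℝ (Fin m)) := by
  intro p
  have hπd : ∀ q, HasFDerivAt π (fderiv ℝ π q) q :=
    fun q => (hπ.differentiable (by simp) q).hasFDerivAt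
  have h𝒜 : ContDiff ℝ (⊤ : ℕ∞) (fderiv ℝ π) := hπ.fderiv_right (by simp)
  have hDd : HasFDerivAt (fderiv ℝ π) (fderiv ℝ (fderiv ℝ π) p) p :=
    ((h𝒜.differentiable (by simp)) p).hasFDerivAt
  have hsym : ∀ v w, fderiv ℝ (fderiv ℝ π) p v w = fderiv ℝ (fderiv ℝ π) p w v :=
    second_derivative_symmetric hπd hDd
  -- closed forms for the lifts
  have hXb' : ∀ q, Xb q = ContinuousLinearMap.adjoint (fderiv ℝ π q) (X (π q)) := fun q => by
    rw [← (hXb q).2, lift_unique (hiso q) (hXb q).1]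
  have hYb' : ∀ q, Yb q = ContinuousLinearMap.adjoint (fderiv ℝ π q) (Y (π q)) := fun q => by
    rw [← (hYb q).2, lift_unique (hiso q) (hYb q).1]
  have hZb' : Zb p = ContinuousLinearMap.adjoint (fderiv ℝ π p)
      (fderiv ℝ Y (π p) (X (π p))) := by
    rw [← (hZb p).2, lift_unique (hiso p) (hZb p).1]
  have hAA : ∀ q y, fderiv ℝ π q (ContinuousLinearMap.adjoint (fderiv ℝ π q) y) = y :=
    fun q => right_inv (hsurj q) (hiso q)
  have hstar := star_id π p hπ hAA
  -- abbreviations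
  set A := fderiv ℝ π p with hA
  set D := fderiv ℝ (fderiv ℝ π) p with hD
  set X₀ := X (π p) with hX₀
  set Y₀ := Y (π p) with hY₀
  -- the derivative of Yb at p applied to Xb p
  have hWd : fderiv ℝ Yb p = (ContinuousLinearMap.adjoint A).comp
      ((fderiv ℝ Y (π p)).comp A) + (((adjCLM _ _).comp D).flip Y₀) := by
    rw [funext hYb']
    exact (lift_deriv π p hπ Y hY).fderiv
  have hW'd : fderiv ℝ Xb p = (ContinuousLinearMap.adjoint A).comp
      ((fderiv ℝ X (π p)).comp A) + (((adjCLM _ _).comp D).flip X₀) := by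
    rw [funext hXb']
    exact (lift_deriv π p hπ X hX).fderiv
  have hXbA : Xb p = ContinuousLinearMap.adjoint A X₀ := hXb' p
  have hYbA : Yb p = ContinuousLinearMap.adjoint A Y₀ := hYb' p
  set q := ContinuousLinearMap.adjoint (D (Xb p)) Y₀ with hq
  set q' := ContinuousLinearMap.adjoint (D (Yb p)) X₀ with hq'
  have hW : fderiv ℝ Yb p (Xb p) = Zb p + q := by
    rw [hWd]
    simp only [ContinuousLinearMap.add_apply, ContinuousLinearMap.comp_apply,
      ContinuousLinearMap.flip_apply, adjCLM_apply]
    rw [(hXb p).2, ← hX₀, ← hZb', hq]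
  have hW' : fderiv ℝ Xb p (Yb p) =
      ContinuousLinearMap.adjoint A (fderiv ℝ X (π p) Y₀) + q' := by
    rw [hW'd]
    simp only [ContinuousLinearMap.add_apply, ContinuousLinearMap.comp_apply,
      ContinuousLinearMap.flip_apply, adjCLM_apply]
    rw [(hYb p).2, ← hY₀, hq']
  -- K1 : q' = -q
  have hK1 : q' = -q := by
    apply ext_inner_right ℝ
    intro w
    rw [hq', hq, inner_neg_left]
    rw [ContinuousLinearMap.adjoint_inner_left, ContinuousLinearMap.adjoint_inner_left]
    rw [hsym (Yb p) w, hYbA]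
    have e1 : D w (ContinuousLinearMap.adjoint A Y₀)
        = -(A (ContinuousLinearMap.adjoint (D w) Y₀)) := by
      rw [hstar Y₀ w, neg_neg]
    rw [e1, inner_neg_right]
    congr 1
    calc ⟪X₀, A (ContinuousLinearMap.adjoint (D w) Y₀)⟫
        = ⟪ContinuousLinearMap.adjoint A X₀, ContinuousLinearMap.adjoint (D w) Y₀⟫ := by
          rw [ContinuousLinearMap.adjoint_inner_left]
      _ = ⟪D w (ContinuousLinearMap.adjoint A X₀), Y₀⟫ := by
          rw [ContinuousLinearMap.adjoint_inner_right]
      _ = ⟪Y₀, D (Xb p) w⟫ := by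
          rw [real_inner_comm, ← hXbA, hsym]
  -- trilinear form vanishes
  have hf : ∀ a b c, ⟪c, D (ContinuousLinearMap.adjoint A a)
      (ContinuousLinearMap.adjoint A b)⟫ = 0 := by
    have hanti : ∀ a b c, ⟪c, D (ContinuousLinearMap.adjoint A a)
        (ContinuousLinearMap.adjoint A b)⟫
        = -⟪b, D (ContinuousLinearMap.adjoint A a) (ContinuousLinearMap.adjoint A c)⟫ := by
      intro a b c
      calc ⟪c, D (ContinuousLinearMap.adjoint A a) (ContinuousLinearMap.adjoint A b)⟫
          = ⟪ContinuousLinearMap.adjoint (D (ContinuousLinearMap.adjoint A a)) c,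
              ContinuousLinearMap.adjoint A b⟫ := by
            rw [ContinuousLinearMap.adjoint_inner_left]
        _ = ⟪A (ContinuousLinearMap.adjoint (D (ContinuousLinearMap.adjoint A a)) c), b⟫ := by
            rw [ContinuousLinearMap.adjoint_inner_right]
        _ = ⟪-(D (ContinuousLinearMap.adjoint A a)) (ContinuousLinearMap.adjoint A c), b⟫ := by
            rw [hstar c (ContinuousLinearMap.adjoint A a)]
        _ = -⟪b, D (ContinuousLinearMap.adjoint A a) (ContinuousLinearMap.adjoint A c)⟫ := by
            rw [inner_neg_left, real_inner_comm]
    have hsymf : ∀ a b c, ⟪c, D (ContinuousLinearMap.adjoint A a)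
        (ContinuousLinearMap.adjoint A b)⟫
        = ⟪c, D (ContinuousLinearMap.adjoint A b) (ContinuousLinearMap.adjoint A a)⟫ :=
      fun a b c => by rw [hsym]
    intro a b c
    have h1 := hanti a b c
    have h2 := hsymf a c b
    have h3 := hanti c a b
    have h4 := hsymf c b a
    have h5 := hanti b c a
    have h6 := hsymf b a c
    linarith
  -- K2 : q is vertical
  have hqker : q ∈ LinearMap.ker (A : EuclideanSpace ℝ (Fin m) →ₗ[ℝ] EuclideanSpace ℝ (Fin k)) := by
    rw [LinearMap.mem_ker]
    apply ext_inner_right ℝ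
    intro c
    rw [inner_zero_left]
    calc ⟪A q, c⟫ = ⟪q, ContinuousLinearMap.adjoint A c⟫ :=
          (ContinuousLinearMap.adjoint_inner_right _ _ _).symm
      _ = ⟪Y₀, D (Xb p) (ContinuousLinearMap.adjoint A c)⟫ := by
          rw [hq, ContinuousLinearMap.adjoint_inner_left]
      _ = 0 := by rw [hXbA]; exact hf X₀ c Y₀
  -- conclude
  constructor
  · rw [hW, map_add]
    push_cast
    rw [(Submodule.starProjection_apply _ _).symm.trans (Submodule.starProjection_eq_self_iff.mpr (hZb p).1),
      Submodule.orthogonalProjectionOnto_apply_of_mem_orthogonal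
        (Submodule.le_orthogonal_orthogonal _ hqker)]
    simp
  · rw [hW, hW', hK1]
    have e0 : Zb p + q - (ContinuousLinearMap.adjoint A (fderiv ℝ X (π p) Y₀) + -q)
        = (Zb p - ContinuousLinearMap.adjoint A (fderiv ℝ X (π p) Y₀)) + (q + q) := by
      abel
    rw [e0, map_add]
    push_cast
    rw [Submodule.orthogonalProjectionOnto_apply_of_mem_orthogonal
        (Submodule.sub_mem _ (hZb p).1 (adj_mem_orth A _)),
      (Submodule.starProjection_apply _ _).symm.trans (Submodule.starProjection_eq_self_iff.mpr (Submodule.add_mem _ hqker hqker))]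
    push_cast
    module
end

section
/- In the half-space model of ℍⁿ with metric δ_{ij}/xₙ², the radial projection x ↦ x/|x| (where |x| is the Euclidean norm) is a Riemannian submersion from ℍⁿ onto the unit Euclidean hemisphere S = {x ∈ ℍⁿ : |x| = 1} equipped with its induced metric; moreover S with this induced metric is isometric to hyperbolic space of dimension n−1. -/
/-!
The differential of `x ↦ x / ‖x‖` at `x` is `‖x‖⁻¹` times the orthogonal projection onto `x^⊥`:
it kills the radial direction and scales horizontal vectors by the same factor `‖x‖⁻¹` by which
it scales the height `xₙ`, so the hyperbolic ratio `⟪u, v⟫ / xₙ²` is preserved.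

For the second part, invert in the sphere of radius `√2` about the south pole `-e₀`. A sphere
through the centre of an inversion is mapped to a hyperplane, here the unit sphere to `{y₀ = 0}`;
the inversion is conformal with factor `k = 2 / ‖x + e₀‖²` and multiplies every coordinate other
than the `0`-th by `k`. Dropping the coordinate `y₀` therefore maps the upper hemisphere bijectively
onto the upper half-space of dimension `n - 1`, and both the metric and the squared height scale
by `k²`.
-/

open RealInnerProductSpace EuclideanGeometry WithLp

section Coordinates

variable {ι : Type*} [Fintype ι]

theorem sqrt_sum_sq_eq_norm_toLp (x : ι → ℝ) : √(∑ i, x i ^ 2) = ‖toLp 2 x‖ := by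
  simp [EuclideanSpace.norm_eq]

theorem sum_sq_eq_one_iff_norm_toLp (x : ι → ℝ) : ∑ i, x i ^ 2 = 1 ↔ ‖toLp 2 x‖ = 1 := by
  rw [← EuclideanSpace.real_norm_sq_eq, pow_eq_one_iff_of_nonneg (norm_nonneg _) two_ne_zero]

theorem sum_smul_mul_smul (a b : ℝ) (u v : ι → ℝ) :
    ∑ i, (a • u) i * (b • v) i = a * b * ∑ i, u i * v i := by
  simp only [Pi.smul_apply, smul_eq_mul, Finset.mul_sum]
  exact Finset.sum_congr rfl fun i _ => by ring

end Coordinates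

section InnerProductSpace

variable {E : Type*} [NormedAddCommGroup E] [InnerProductSpace ℝ E]

theorem hasFDerivAt_norm_of_ne_zero {x : E} (hx : x ≠ 0) :
    HasFDerivAt (fun y : E => ‖y‖) (‖x‖⁻¹ • innerSL ℝ x) x := by
  have h := (Real.hasDerivAt_sqrt (pow_ne_zero 2 (norm_ne_zero_iff.2 hx))).comp_hasFDerivAt x
    (hasStrictFDerivAt_norm_sq x).hasFDerivAt
  rw [show ((fun t => √t) ∘ fun y : E => ‖y‖ ^ 2) = fun y => ‖y‖ from
    funext fun y => Real.sqrt_sq (norm_nonneg y), Real.sqrt_sq (norm_nonneg x)] at h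
  refine h.congr_fderiv (ContinuousLinearMap.ext fun u => ?_)
  simp only [one_div, mul_inv_rev, smul_apply, coe_innerSL_apply, nsmul_eq_mul, Nat.cast_ofNat,
    smul_eq_mul]
  field_simp

theorem fderiv_norm_inv_smul_apply {x : E} (hx : x ≠ 0) (u : E) :
    fderiv ℝ (fun y : E => ‖y‖⁻¹ • y) x u = ‖x‖⁻¹ • u - (⟪x, u⟫ / ‖x‖ ^ 3) • x := by
  have h : HasFDerivAt (fun y : E => ‖y‖⁻¹ • y) _ x :=
    ((hasDerivAt_inv (norm_ne_zero_iff.2 hx)).comp_hasFDerivAt x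
      (hasFDerivAt_norm_of_ne_zero hx)).smul (hasFDerivAt_id x)
  rw [h.fderiv]
  simp only [Function.comp_apply, neg_smul, add_apply, smul_apply, ContinuousLinearMap.id_apply,
    ContinuousLinearMap.smulRight_apply, neg_apply, coe_innerSL_apply, smul_eq_mul]
  rw [← sub_eq_add_neg]
  congr 2
  ring

theorem fderiv_norm_inv_smul_self {x : E} (hx : x ≠ 0) :
    fderiv ℝ (fun y : E => ‖y‖⁻¹ • y) x x = 0 := by
  have hx' : ‖x‖ ≠ 0 := norm_ne_zero_iff.2 hx
  rw [fderiv_norm_inv_smul_apply hx, real_inner_self_eq_norm_sq, sub_eq_zero]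
  congr 1
  field_simp

theorem fderiv_norm_inv_smul_of_inner_eq_zero {x u : E} (hx : x ≠ 0) (hu : ⟪x, u⟫ = 0) :
    fderiv ℝ (fun y : E => ‖y‖⁻¹ • y) x u = ‖x‖⁻¹ • u := by
  rw [fderiv_norm_inv_smul_apply hx, hu, zero_div, zero_smul, sub_zero]

theorem inner_fderiv_inversion {c x : E} (hx : x ≠ c) (R : ℝ) (u v : E) :
    ⟪fderiv ℝ (inversion c R) x u, fderiv ℝ (inversion c R) x v⟫ =
      (R / dist x c) ^ 4 * ⟪u, v⟫ := by
  rw [(hasFDerivAt_inversion hx).fderiv]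
  simp only [smul_apply, ContinuousLinearEquiv.coe_coe,
    LinearIsometryEquiv.coe_toContinuousLinearEquiv, real_inner_smul_left,
    real_inner_smul_right, LinearIsometryEquiv.inner_map_map]
  ring

theorem inner_center_fderiv_inversion_eq_zero {c x u : E} (hx : x ≠ c) (hxc : ‖x‖ = ‖c‖)
    (hu : ⟪x, u⟫ = 0) (R : ℝ) : ⟪c, fderiv ℝ (inversion c R) x u⟫ = 0 := by
  have hw : ‖x - c‖ ≠ 0 := norm_ne_zero_iff.2 (sub_ne_zero.2 hx)
  have hcw : ⟪c, x - c⟫ = -(‖x - c‖ ^ 2 / 2) := by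
    rw [← real_inner_self_eq_norm_sq]
    simp only [inner_sub_left, inner_sub_right, real_inner_self_eq_norm_sq, hxc,
      real_inner_comm x c]
    ring
  have hwu : ⟪x - c, u⟫ = -⟪c, u⟫ := by rw [inner_sub_left, hu, zero_sub]
  have hrefl : ⟪c, (ℝ ∙ (x - c)).reflection u⟫ = 0 := by
    rw [Submodule.reflection_singleton_apply, inner_sub_right, inner_smul_right_eq_smul,
      inner_smul_right_eq_smul, hcw, hwu]
    simp only [Real.ringHom_apply, smul_eq_mul, mul_neg, smul_neg, nsmul_eq_mul, Nat.cast_ofNat]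
    field_simp
    ring
  rw [(hasFDerivAt_inversion hx).fderiv, smul_apply, inner_smul_right,
    ContinuousLinearEquiv.coe_coe, LinearIsometryEquiv.coe_toContinuousLinearEquiv,
    Submodule.reflection_orthogonal_apply, inner_neg_right, hrefl, neg_zero, mul_zero]

theorem inner_inversion_eq_zero_iff {e x : E} (he : ‖e‖ = 1) (hx : x ≠ -e) :
    ⟪e, inversion (-e) √2 x⟫ = 0 ↔ ‖x‖ = 1 := by
  have he0 : (0 : E) ≠ -e := by
    rw [ne_eq, eq_comm, neg_eq_zero, ← norm_eq_zero, he]; exact one_ne_zero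
  have hinv : inversion (-e) √2 (0 : E) = e := by
    rw [inversion, dist_zero_left, norm_neg, he, div_one, Real.sq_sqrt zero_le_two, vsub_eq_sub,
      zero_sub, neg_neg, vadd_eq_add, two_smul, add_neg_cancel_right]
  have key := inversion_mem_perpBisector_inversion_iff (Real.sqrt_ne_zero'.2 zero_lt_two) hx he0
  rw [hinv, AffineSubspace.mem_perpBisector_iff_inner_eq_zero, dist_zero_right, dist_zero_left,
    norm_neg, he] at key
  rw [← key, midpoint_neg_self, vsub_eq_sub, vsub_eq_sub, sub_zero, sub_neg_eq_add,
    ← two_smul ℝ e, real_inner_smul_right, real_inner_comm, mul_eq_zero_iff_left two_ne_zero]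

end InnerProductSpace

section RadialProjection

variable {ι : Type*} [Fintype ι]

noncomputable def radialProj (x : ι → ℝ) : ι → ℝ := (√(∑ i, x i ^ 2))⁻¹ • x

theorem fderiv_radialProj_apply (x u : ι → ℝ) :
    fderiv ℝ radialProj x u =
      ofLp (fderiv ℝ (fun y : EuclideanSpace ℝ ι => ‖y‖⁻¹ • y) (toLp 2 x) (toLp 2 u)) := by
  have hπ : (radialProj : (ι → ℝ) → ι → ℝ) =
      EuclideanSpace.equiv ι ℝ ∘ (fun y : EuclideanSpace ℝ ι => ‖y‖⁻¹ • y) ∘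
        (EuclideanSpace.equiv ι ℝ).symm := by
    funext x
    simp only [radialProj, sqrt_sum_sq_eq_norm_toLp, Function.comp_apply,
      PiLp.continuousLinearEquiv_symm_apply, map_smul]
    rfl
  rw [hπ, ContinuousLinearEquiv.comp_fderiv, ContinuousLinearEquiv.comp_right_fderiv]
  rfl

theorem fderiv_radialProj_self {x : ι → ℝ} (hx : x ≠ 0) : fderiv ℝ radialProj x x = 0 := by
  rw [fderiv_radialProj_apply, fderiv_norm_inv_smul_self ((toLp_eq_zero 2).not.2 hx)]
  rfl

theorem fderiv_radialProj_of_orthogonal {x u : ι → ℝ} (hx : x ≠ 0) (hu : ∑ i, u i * x i = 0) :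
    fderiv ℝ radialProj x u = (√(∑ i, x i ^ 2))⁻¹ • u := by
  rw [fderiv_radialProj_apply, fderiv_norm_inv_smul_of_inner_eq_zero
    ((toLp_eq_zero 2).not.2 hx) hu, sqrt_sum_sq_eq_norm_toLp]
  rfl

theorem sum_fderiv_radialProj_mul_radialProj {x u : ι → ℝ} (hx : x ≠ 0)
    (hu : ∑ i, u i * x i = 0) : ∑ i, fderiv ℝ radialProj x u i * radialProj x i = 0 := by
  rw [fderiv_radialProj_of_orthogonal hx hu, radialProj, sum_smul_mul_smul, hu, mul_zero]

theorem radialProj_metric {x u v : ι → ℝ} (k : ι) (hx : x ≠ 0) (hu : ∑ i, u i * x i = 0)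
    (hv : ∑ i, v i * x i = 0) :
    (∑ i, fderiv ℝ radialProj x u i * fderiv ℝ radialProj x v i) / radialProj x k ^ 2 =
      (∑ i, u i * v i) / x k ^ 2 := by
  have hs : √(∑ i, x i ^ 2) ≠ 0 := by
    rw [sqrt_sum_sq_eq_norm_toLp, norm_ne_zero_iff]; exact (toLp_eq_zero 2).not.2 hx
  rw [fderiv_radialProj_of_orthogonal hx hu, fderiv_radialProj_of_orthogonal hx hv,
    sum_smul_mul_smul, radialProj, Pi.smul_apply, smul_eq_mul]
  by_cases hk : x k = 0
  · simp [hk]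
  · field_simp

end RadialProjection

section HemisphereChart

variable {m : ℕ}

noncomputable def southPole (m : ℕ) : EuclideanSpace ℝ (Fin (m + 1)) :=
  -EuclideanSpace.single 0 1

noncomputable def hemisphereChart (x : Fin (m + 1) → ℝ) : Fin m → ℝ :=
  fun j => inversion (southPole m) √2 (toLp 2 x) j.succ

theorem southPole_apply_succ (j : Fin m) : southPole m j.succ = 0 := by
  simp [southPole]

theorem norm_southPole : ‖southPole m‖ = 1 := by
  simp [southPole]

theorem toLp_ne_southPole {x : Fin (m + 1) → ℝ} {j : Fin m} (hx : 0 < x j.succ) :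
    toLp 2 x ≠ southPole m := fun h => by
  have := southPole_apply_succ j
  rw [← h] at this
  exact hx.ne' this

theorem sq_sqrt_two_div_dist_southPole_pos {y : EuclideanSpace ℝ (Fin (m + 1))}
    (hy : y ≠ southPole m) :
    0 < (√2 / dist y (southPole m)) ^ 2 := by
  have := dist_pos.2 hy
  positivity

theorem inversion_southPole_apply_succ (y : EuclideanSpace ℝ (Fin (m + 1))) (j : Fin m) :
    inversion (southPole m) √2 y j.succ = (√2 / dist y (southPole m)) ^ 2 * y j.succ := by
  simp [inversion, southPole_apply_succ]

theorem inversion_southPole_apply_zero_eq_zero_iff {y : EuclideanSpace ℝ (Fin (m + 1))}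
    (hy : y ≠ southPole m) : inversion (southPole m) √2 y 0 = 0 ↔ ‖y‖ = 1 := by
  have h := inner_inversion_eq_zero_iff (e := EuclideanSpace.single 0 1) (by simp) hy
  simp only [EuclideanSpace.inner_single_left, map_one, one_mul] at h
  exact h

theorem hemisphereChart_apply (x : Fin (m + 1) → ℝ) (j : Fin m) :
    hemisphereChart x j = (√2 / dist (toLp 2 x) (southPole m)) ^ 2 * x j.succ :=
  inversion_southPole_apply_succ _ j

theorem fderiv_hemisphereChart_apply {x : Fin (m + 1) → ℝ} (hx : toLp 2 x ≠ southPole m)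
    (u : Fin (m + 1) → ℝ) (j : Fin m) :
    fderiv ℝ hemisphereChart x u j =
      fderiv ℝ (inversion (southPole m) √2) (toLp 2 x) (toLp 2 u) j.succ := by
  set L : EuclideanSpace ℝ (Fin (m + 1)) →L[ℝ] (Fin m → ℝ) :=
    ContinuousLinearMap.pi fun j => EuclideanSpace.proj j.succ
  have h : HasFDerivAt hemisphereChart _ x :=
    (L.hasFDerivAt.comp _ (hasFDerivAt_inversion (R := √2) hx)).comp x
      (EuclideanSpace.equiv (Fin (m + 1)) ℝ).symm.hasFDerivAt
  rw [h.fderiv, (hasFDerivAt_inversion (R := √2) hx).fderiv]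
  rfl

theorem sum_fderiv_hemisphereChart_mul {x u v : Fin (m + 1) → ℝ} (hx1 : ∑ i, x i ^ 2 = 1)
    (hx : toLp 2 x ≠ southPole m) (hu : ∑ i, u i * x i = 0) :
    ∑ j, fderiv ℝ hemisphereChart x u j * fderiv ℝ hemisphereChart x v j =
      (√2 / dist (toLp 2 x) (southPole m)) ^ 4 * ∑ i, u i * v i := by
  set D := fderiv ℝ (inversion (southPole m) √2) (toLp 2 x)
  have hxS : ‖toLp 2 x‖ = ‖southPole m‖ := by
    rw [norm_southPole, ← sum_sq_eq_one_iff_norm_toLp, hx1]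
  have hDu : D (toLp 2 u) 0 = 0 := by
    have h := inner_center_fderiv_inversion_eq_zero hx hxS hu (√2)
    simp only [southPole, inner_neg_left, EuclideanSpace.inner_single_left, map_one, one_mul,
      neg_eq_zero] at h
    exact h
  calc ∑ j, fderiv ℝ hemisphereChart x u j * fderiv ℝ hemisphereChart x v j
      = ∑ i, D (toLp 2 u) i * D (toLp 2 v) i := by
        simp_rw [fderiv_hemisphereChart_apply hx, Fin.sum_univ_succ (n := m), hDu, zero_mul,
          zero_add]
        rfl
    _ = ⟪D (toLp 2 v), D (toLp 2 u)⟫ := rfl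
    _ = (√2 / dist (toLp 2 x) (southPole m)) ^ 4 * ∑ i, u i * v i :=
        inner_fderiv_inversion hx (√2) (toLp 2 v) (toLp 2 u)

theorem hemisphereChart_metric {x u v : Fin (m + 1) → ℝ} {j : Fin m} (hx1 : ∑ i, x i ^ 2 = 1)
    (hxj : 0 < x j.succ) (hu : ∑ i, u i * x i = 0) :
    (∑ i, fderiv ℝ hemisphereChart x u i * fderiv ℝ hemisphereChart x v i) /
        hemisphereChart x j ^ 2 = (∑ i, u i * v i) / x j.succ ^ 2 := by
  have hx := toLp_ne_southPole hxj
  rw [sum_fderiv_hemisphereChart_mul hx1 hx hu, hemisphereChart_apply]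
  have := dist_ne_zero.2 hx
  field_simp

theorem bijOn_hemisphereChart (j : Fin m) :
    Set.BijOn hemisphereChart {x : Fin (m + 1) → ℝ | ∑ i, x i ^ 2 = 1 ∧ 0 < x j.succ}
      {z | 0 < z j} := by
  have hR : √2 ≠ 0 := Real.sqrt_ne_zero'.2 zero_lt_two
  refine ⟨fun x ⟨_, hxj⟩ => ?_, fun x₁ ⟨hx₁, hx₁j⟩ x₂ ⟨hx₂, hx₂j⟩ h => ?_, fun z hz => ?_⟩
  · rw [Set.mem_ofPred_eq, hemisphereChart_apply]
    exact mul_pos (sq_sqrt_two_div_dist_southPole_pos (toLp_ne_southPole hxj)) hxj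
  · have hX₁ := toLp_ne_southPole hx₁j
    have hX₂ := toLp_ne_southPole hx₂j
    have hinv : inversion (southPole m) √2 (toLp 2 x₁) = inversion (southPole m) √2 (toLp 2 x₂) :=
      PiLp.ext fun i => Fin.cases (by
        rw [(inversion_southPole_apply_zero_eq_zero_iff hX₁).2
            ((sum_sq_eq_one_iff_norm_toLp _).1 hx₁),
          (inversion_southPole_apply_zero_eq_zero_iff hX₂).2
            ((sum_sq_eq_one_iff_norm_toLp _).1 hx₂)])
        (fun k => congrFun h k) i
    exact toLp_injective 2 (inversion_injective _ hR hinv)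
  · set y : EuclideanSpace ℝ (Fin (m + 1)) := toLp 2 (Fin.cons 0 z)
    have hy : y ≠ southPole m := fun h => by
      simpa [y, southPole] using congrArg (· 0) h
    set Y := inversion (southPole m) √2 y
    have hYY : inversion (southPole m) √2 Y = y := inversion_inversion _ hR y
    have hY : Y ≠ southPole m := fun h => hy (by rw [← hYY, h, inversion_self])
    have hY1 : ‖Y‖ = 1 := (inversion_southPole_apply_zero_eq_zero_iff hY).1 (by simp [hYY, y])
    refine ⟨ofLp Y, ⟨(sum_sq_eq_one_iff_norm_toLp _).2 hY1, ?_⟩, ?_⟩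
    · rw [inversion_southPole_apply_succ]
      exact mul_pos (sq_sqrt_two_div_dist_southPole_pos hy) (by simpa [y] using hz)
    · funext k
      simp [hemisphereChart, hYY, y]

end HemisphereChart

theorem stmt_12_general {n : ℕ}
    (lastI : Fin n) (hlast : (lastI : ℕ) = n - 1)
    (lastI' : Fin (n-1)) (hlast' : (lastI' : ℕ) = n - 2)
    (π : (Fin n → ℝ) → (Fin n → ℝ))
    (hπ : ∀ x, π x = (Real.sqrt (∑ i, x i ^ 2))⁻¹ • x) :
    (∀ x : Fin n → ℝ, 0 < x lastI →
      (fderiv ℝ π x x = 0) ∧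
      ∀ u v : Fin n → ℝ, (∑ i, u i * x i) = 0 → (∑ i, v i * x i) = 0 →
        (∑ i, fderiv ℝ π x u i * π x i) = 0 ∧
        (∑ i, fderiv ℝ π x u i * fderiv ℝ π x v i) / (π x lastI) ^ 2
          = (∑ i, u i * v i) / (x lastI) ^ 2) ∧
    (∃ Φ : (Fin n → ℝ) → (Fin (n-1) → ℝ),
      Set.BijOn Φ {x | ∑ i, x i ^ 2 = 1 ∧ 0 < x lastI} {z | 0 < z lastI'} ∧
      ∀ x : Fin n → ℝ, (∑ i, x i ^ 2 = 1 ∧ 0 < x lastI) →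
        ∀ u v : Fin n → ℝ, (∑ i, u i * x i) = 0 → (∑ i, v i * x i) = 0 →
          (∑ i, fderiv ℝ Φ x u i * fderiv ℝ Φ x v i) / (Φ x lastI') ^ 2
            = (∑ i, u i * v i) / (x lastI) ^ 2) := by
  obtain rfl : π = radialProj := funext hπ
  obtain ⟨m, rfl⟩ : ∃ m, n = m + 1 := ⟨n - 1, by have := lastI.pos; omega⟩
  obtain rfl : lastI = Fin.succ (lastI' : Fin m) := Fin.ext (by
    have := lastI'.isLt
    simp only [Fin.val_succ]
    omega)
  refine ⟨fun x hx => ?_, hemisphereChart, bijOn_hemisphereChart lastI',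
    fun x ⟨hx1, hxl⟩ u v hu _ => hemisphereChart_metric hx1 hxl hu⟩
  have hx0 : x ≠ 0 := fun h => by simp [h] at hx
  exact ⟨fderiv_radialProj_self hx0, fun u v hu hv =>
    ⟨sum_fderiv_radialProj_mul_radialProj hx0 hu, radialProj_metric _ hx0 hu hv⟩⟩

/-- In the half-space model of `ℍⁿ` (metric `δ_{ij}/xₙ²`, with `lastI` the index `n`),
the radial projection `π(x) = x/|x|` (`|·|` the Euclidean norm) is a Riemannian
submersion onto `S = {|x| = 1, xₙ > 0}` with its induced metric: `dπ` maps tangent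
vectors into tangent vectors of the sphere, kills the radial (orbit) direction, and
preserves the hyperbolic inner products on horizontal vectors (those Euclidean-orthogonal
to `x`); moreover `S` is isometric to hyperbolic space of dimension `n−1`, i.e. there is
a bijection `Φ` of `S` onto the upper half-space `{z : z_{n−1} > 0}` whose differential
pulls the metric `δ_{ij}/z_{n−1}²` back to the induced metric of `S`. -/
theorem stmt_12 {n : ℕ} (hn : 3 ≤ n)
    (lastI : Fin n) (hlast : (lastI : ℕ) = n - 1)
    (lastI' : Fin (n-1)) (hlast' : (lastI' : ℕ) = n - 2)
    (π : (Fin n → ℝ) → (Fin n → ℝ))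
    (hπ : ∀ x, π x = (Real.sqrt (∑ i, x i ^ 2))⁻¹ • x) :
    (∀ x : Fin n → ℝ, 0 < x lastI →
      (fderiv ℝ π x x = 0) ∧
      ∀ u v : Fin n → ℝ, (∑ i, u i * x i) = 0 → (∑ i, v i * x i) = 0 →
        (∑ i, fderiv ℝ π x u i * π x i) = 0 ∧
        (∑ i, fderiv ℝ π x u i * fderiv ℝ π x v i) / (π x lastI) ^ 2
          = (∑ i, u i * v i) / (x lastI) ^ 2) ∧
    (∃ Φ : (Fin n → ℝ) → (Fin (n-1) → ℝ),
      Set.BijOn Φ {x | ∑ i, x i ^ 2 = 1 ∧ 0 < x lastI} {z | 0 < z lastI'} ∧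
      ∀ x : Fin n → ℝ, (∑ i, x i ^ 2 = 1 ∧ 0 < x lastI) →
        ∀ u v : Fin n → ℝ, (∑ i, u i * x i) = 0 → (∑ i, v i * x i) = 0 →
          (∑ i, fderiv ℝ Φ x u i * fderiv ℝ Φ x v i) / (Φ x lastI') ^ 2
            = (∑ i, u i * v i) / (x lastI) ^ 2) :=
  stmt_12_general lastI hlast lastI' hlast' π hπ
end

section
/- Define g_c(s) = c∫ₛ^∞ (cosh t)^{2−n}(1−c²(cosh t)^{4−2n})^{−1/2} dt for 0 < c < 1 and n ≥ 4. Then: (i) g_c is well-defined and finite for every s > 0 when n ≥ 4 (the integrand decays like e^{(2−n)t}); (ii) g_c is strictly decreasing with g_c(s) → 0 as s → ∞; (iii) g_c(0⁺) → +∞ as c → 1⁻. -/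
open Filter

open MeasureTheory Set Real

private noncomputable def barF (c : ℝ) (n : ℕ) : ℝ → ℝ := fun t =>
  (Real.cosh t) ^ ((2:ℝ) - n) / Real.sqrt (1 - c ^ 2 * (Real.cosh t) ^ ((4:ℝ) - 2*n))

private lemma bar_den_lb {n : ℕ} (hn : 4 ≤ n) {c : ℝ} (hc1 : c < 1) (hc0 : 0 < c) (t : ℝ) :
    1 - c ^ 2 ≤ 1 - c ^ 2 * (Real.cosh t) ^ ((4:ℝ) - 2*n) := by
  have hn' : (4:ℝ) ≤ n := by exact_mod_cast hn
  have h1 : (Real.cosh t) ^ ((4:ℝ) - 2*n) ≤ 1 :=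
    Real.rpow_le_one_of_one_le_of_nonpos (Real.one_le_cosh t) (by linarith)
  nlinarith [sq_nonneg c]

private lemma bar_eps_pos {c : ℝ} (hc1 : c < 1) (hc0 : 0 < c) : 0 < 1 - c ^ 2 := by nlinarith

private lemma bar_pos {n : ℕ} (hn : 4 ≤ n) {c : ℝ} (hc1 : c < 1) (hc0 : 0 < c) (t : ℝ) :
    0 < barF c n t := by
  apply div_pos (Real.rpow_pos_of_pos (Real.cosh_pos t) _)
  exact Real.sqrt_pos.2 (lt_of_lt_of_le (bar_eps_pos hc1 hc0) (bar_den_lb hn hc1 hc0 t))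

private lemma bar_cont {n : ℕ} (hn : 4 ≤ n) {c : ℝ} (hc1 : c < 1) (hc0 : 0 < c) :
    Continuous (barF c n) := by
  apply Continuous.div
  · exact Real.continuous_cosh.rpow_const (fun t => Or.inl (Real.cosh_pos t).ne')
  · exact (continuous_const.sub (continuous_const.mul
      (Real.continuous_cosh.rpow_const (fun t => Or.inl (Real.cosh_pos t).ne')))).sqrt
  · intro t
    exact (Real.sqrt_pos.2 (lt_of_lt_of_le (bar_eps_pos hc1 hc0) (bar_den_lb hn hc1 hc0 t))).ne'

private lemma bar_integrable {n : ℕ} (hn : 4 ≤ n) {c : ℝ} (hc1 : c < 1) (hc0 : 0 < c) (s : ℝ) :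
    IntegrableOn (barF c n) (Set.Ioi s) := by
  have hn' : (4:ℝ) ≤ n := by exact_mod_cast hn
  have hb : (0:ℝ) < (n:ℝ) - 2 := by linarith
  have hInt : IntegrableOn
      (fun t => (2 ^ ((n:ℝ) - 2) / Real.sqrt (1 - c ^ 2)) * Real.exp (-((n:ℝ) - 2) * t))
      (Set.Ioi s) := (exp_neg_integrableOn_Ioi s hb).const_mul _
  refine hInt.mono' ((bar_cont hn hc1 hc0).aestronglyMeasurable.restrict) ?_
  filter_upwards with t
  rw [Real.norm_of_nonneg (bar_pos hn hc1 hc0 t).le]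
  have h1 : barF c n t ≤ (Real.cosh t) ^ ((2:ℝ) - n) / Real.sqrt (1 - c ^ 2) := by
    apply div_le_div_of_nonneg_left (Real.rpow_nonneg (Real.cosh_pos t).le _)
      (Real.sqrt_pos.2 (bar_eps_pos hc1 hc0))
    exact Real.sqrt_le_sqrt (bar_den_lb hn hc1 hc0 t)
  have h2 : (Real.cosh t) ^ ((2:ℝ) - n) ≤ (Real.exp t / 2) ^ ((2:ℝ) - n) := by
    apply Real.rpow_le_rpow_of_nonpos (by positivity) ?_ (by linarith)
    rw [Real.cosh_eq]
    have := (Real.exp_pos (-t)).le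
    linarith
  have h3 : (Real.exp t / 2) ^ ((2:ℝ) - n)
      = 2 ^ ((n:ℝ) - 2) * Real.exp (-((n:ℝ) - 2) * t) := by
    rw [Real.div_rpow (Real.exp_pos t).le (by norm_num),
      Real.rpow_def_of_pos (Real.exp_pos t), Real.log_exp,
      show (2:ℝ) - n = -((n:ℝ) - 2) by ring, Real.rpow_neg (by norm_num : (0:ℝ) ≤ 2),
      div_eq_mul_inv, inv_inv, mul_comm]
    congr 1
    ring_nf
  calc barF c n t ≤ (Real.cosh t) ^ ((2:ℝ) - n) / Real.sqrt (1 - c ^ 2) := h1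
    _ ≤ (Real.exp t / 2) ^ ((2:ℝ) - n) / Real.sqrt (1 - c ^ 2) := by
        gcongr
    _ = 2 ^ ((n:ℝ) - 2) / Real.sqrt (1 - c ^ 2) * Real.exp (-((n:ℝ) - 2) * t) := by
        rw [h3]; ring

private lemma bar_int_pos {n : ℕ} (hn : 4 ≤ n) {c : ℝ} (hc1 : c < 1) (hc0 : 0 < c)
    {a b : ℝ} (hab : a < b) : 0 < ∫ t in Set.Ioc a b, barF c n t := by
  have hi : IntegrableOn (barF c n) (Set.Ioc a b) :=
    (bar_integrable hn hc1 hc0 a).mono_set Set.Ioc_subset_Ioi_self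
  rw [MeasureTheory.setIntegral_pos_iff_support_of_nonneg_ae
    (Filter.Eventually.of_forall fun t => (bar_pos hn hc1 hc0 t).le) hi]
  have hs : Function.support (barF c n) = Set.univ := by
    ext t; simp [Function.mem_support, (bar_pos hn hc1 hc0 t).ne']
  rw [hs, Set.univ_inter, Real.volume_Ioc]
  simpa using hab

private lemma bar_split {n : ℕ} (hn : 4 ≤ n) {c : ℝ} (hc1 : c < 1) (hc0 : 0 < c)
    {a b : ℝ} (hab : a ≤ b) :
    ∫ t in Set.Ioi a, barF c n t
      = (∫ t in Set.Ioc a b, barF c n t) + ∫ t in Set.Ioi b, barF c n t := by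
  rw [← MeasureTheory.setIntegral_union (Set.Ioc_disjoint_Ioi le_rfl) measurableSet_Ioi
    ((bar_integrable hn hc1 hc0 a).mono_set Set.Ioc_subset_Ioi_self)
    (bar_integrable hn hc1 hc0 b), Set.Ioc_union_Ioi_eq_Ioi hab]

private lemma bar_tendsto_zero {n : ℕ} (hn : 4 ≤ n) {c : ℝ} (hc1 : c < 1) (hc0 : 0 < c) :
    Tendsto (fun s => c * ∫ t in Set.Ioi s, barF c n t) atTop (nhds 0) := by
  have h1 : Tendsto (fun s => ∫ t in (0:ℝ)..s, barF c n t) atTop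
      (nhds (∫ t in Set.Ioi 0, barF c n t)) :=
    MeasureTheory.intervalIntegral_tendsto_integral_Ioi 0 (bar_integrable hn hc1 hc0 0) tendsto_id
  have h2 : Tendsto (fun s => c * ((∫ t in Set.Ioi 0, barF c n t) - ∫ t in (0:ℝ)..s, barF c n t))
      atTop (nhds 0) := by
    have := (tendsto_const_nhds (x := ∫ t in Set.Ioi 0, barF c n t) (f := atTop)).sub h1
    rw [sub_self] at this
    simpa using this.const_mul c
  refine h2.congr' ?_
  filter_upwards [eventually_ge_atTop (0:ℝ)] with s hs
  rw [intervalIntegral.integral_of_le hs, bar_split hn hc1 hc0 hs]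
  ring

private lemma exp_sub_one_le (z : ℝ) : Real.exp z - 1 ≤ z * Real.exp z := by
  have h := Real.add_one_le_exp (-z)
  rw [Real.exp_neg] at h
  have h2 : (-z + 1) * Real.exp z ≤ (Real.exp z)⁻¹ * Real.exp z :=
    mul_le_mul_of_nonneg_right h (Real.exp_pos z).le
  rw [inv_mul_cancel₀ (Real.exp_pos z).ne'] at h2
  nlinarith

private lemma cosh_le_quad {t : ℝ} (ht0 : 0 ≤ t) (ht1 : t ≤ 1) :
    Real.cosh t ≤ 1 + 5 * t ^ 2 := by
  have hsinh : Real.sinh (t/2) ≤ (t/2) * Real.exp t := by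
    rw [Real.sinh_eq]
    have h1 : Real.exp (t/2) - Real.exp (-(t/2)) ≤ Real.exp t - 1 := by
      have he : Real.exp (-(t/2)) * Real.exp (t/2) = 1 := by
        rw [← Real.exp_add]; simp
      have hsq : Real.exp (t/2) * Real.exp (t/2) = Real.exp t := by
        rw [← Real.exp_add]; ring_nf
      have hu1 : 1 ≤ Real.exp (t/2) := Real.one_le_exp (by linarith)
      have hv : 0 < Real.exp (-(t/2)) := Real.exp_pos _
      nlinarith [sq_nonneg (Real.exp (t/2) - 1),
        mul_nonneg hv.le (sq_nonneg (Real.exp (t/2) - 1))]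
    have h2 : Real.exp t - 1 ≤ t * Real.exp t := exp_sub_one_le t
    linarith
  have hcosh : Real.cosh t = 2 * Real.sinh (t/2) ^ 2 + 1 := by
    have := Real.cosh_two_mul (t/2)
    have h4 := Real.cosh_sq (t/2)
    rw [show 2 * (t/2) = t by ring] at this
    linarith
  have hexp : Real.exp t ≤ 3 := by
    calc Real.exp t ≤ Real.exp 1 := Real.exp_le_exp.2 ht1
      _ ≤ 3 := by linarith [Real.exp_one_lt_d9]
  have hsnn : 0 ≤ Real.sinh (t/2) := Real.sinh_nonneg_iff.2 (by linarith)
  have : Real.sinh (t/2) ^ 2 ≤ ((t/2) * 3) ^ 2 := by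
    apply sq_le_sq' <;> nlinarith [Real.exp_pos t]
  nlinarith

private lemma coshm_bound {m : ℕ} {t : ℝ} (ht0 : 0 ≤ t) (ht1 : t ≤ 1) :
    Real.cosh t ^ m ≤ 1 + (5 * m * Real.exp (5 * m)) * t ^ 2 := by
  have h1 : Real.cosh t ^ m ≤ Real.exp (5 * t ^ 2) ^ m := by
    apply pow_le_pow_left₀ (Real.cosh_pos t).le
    calc Real.cosh t ≤ 1 + 5 * t ^ 2 := cosh_le_quad ht0 ht1
      _ ≤ Real.exp (5 * t ^ 2) := by
          have := Real.add_one_le_exp (5 * t ^ 2); linarith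
  have h2 : Real.exp (5 * t ^ 2) ^ m = Real.exp (5 * t ^ 2 * m) := by
    rw [← Real.exp_nat_mul]; ring_nf
  have h3 : Real.exp (5 * t ^ 2 * m) - 1 ≤ (5 * t ^ 2 * m) * Real.exp (5 * t ^ 2 * m) :=
    exp_sub_one_le _
  have h4 : Real.exp (5 * t ^ 2 * m) ≤ Real.exp (5 * m) := by
    apply Real.exp_le_exp.2
    have ht2 : t ^ 2 ≤ 1 := by nlinarith
    nlinarith [mul_le_mul_of_nonneg_left ht2 (by positivity : (0:ℝ) ≤ 5 * m)]
  have h5 : (5 * t ^ 2 * m) * Real.exp (5 * t ^ 2 * m) ≤ (5 * m * Real.exp (5 * m)) * t ^ 2 := by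
    have : (0:ℝ) ≤ 5 * t ^ 2 * m := by positivity
    calc (5 * t ^ 2 * m) * Real.exp (5 * t ^ 2 * m)
        ≤ (5 * t ^ 2 * m) * Real.exp (5 * m) := by
          apply mul_le_mul_of_nonneg_left h4 this
      _ = (5 * m * Real.exp (5 * m)) * t ^ 2 := by ring
  nlinarith [h1, h2 ▸ h1]

private lemma bar_lb {n : ℕ} (hn : 4 ≤ n) {c : ℝ} (hc1 : c < 1) (hc0 : 0 < c)
    {t : ℝ} (ht1 : t ≤ 1) (ht0 : Real.sqrt (1 - c ^ 2) < t) :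
    (3 : ℝ) ^ ((2:ℝ) - n) / Real.sqrt (5 * (2*n-4 : ℕ) * Real.exp (5 * (2*n-4 : ℕ)) + 1) / t
      ≤ barF c n t := by
  have hn' : (4:ℝ) ≤ n := by exact_mod_cast hn
  set m : ℕ := 2 * n - 4 with hmdef
  have hm : (m : ℝ) = 2 * (n:ℝ) - 4 := by
    rw [hmdef, Nat.cast_sub (by omega)]; push_cast; ring
  have htpos : 0 < t := lt_of_le_of_lt (Real.sqrt_nonneg _) ht0
  have hε : 1 - c ^ 2 < t ^ 2 := Real.lt_sq_of_sqrt_lt ht0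
  have hX : (Real.cosh t) ^ ((4:ℝ) - 2*n) = (Real.cosh t ^ m)⁻¹ := by
    rw [show (4:ℝ) - 2*n = -(m:ℝ) by rw [hm]; ring, Real.rpow_neg (Real.cosh_pos t).le,
      Real.rpow_natCast]
  set P : ℝ := Real.cosh t ^ m with hPdef
  have hPpos : 0 < P := pow_pos (Real.cosh_pos t) m
  have hP1 : 1 ≤ P := one_le_pow₀ (Real.one_le_cosh t)
  set D : ℝ := 5 * m * Real.exp (5 * m) + 1 with hDdef
  have hD1 : (1:ℝ) ≤ D := by
    have : (0:ℝ) ≤ 5 * m * Real.exp (5 * m) := by positivity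
    linarith
  have hDpos : (0:ℝ) < D := by linarith
  have hPle : P ≤ 1 + (5 * m * Real.exp (5 * m)) * t ^ 2 := coshm_bound htpos.le ht1
  have hstep1 : 1 - c ^ 2 * P⁻¹ ≤ P - c ^ 2 := by
    have h3 : P⁻¹ * (P - 1) ^ 2 = P - 2 + P⁻¹ := by field_simp; ring
    have h4 : (0:ℝ) ≤ P⁻¹ * (P - 1) ^ 2 := by positivity
    have hq0 : 0 < P⁻¹ := inv_pos.2 hPpos
    have hq1 : P⁻¹ ≤ 1 := by
      have := mul_nonneg hq0.le (by linarith : (0:ℝ) ≤ P - 1)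
      have he : P⁻¹ * P = 1 := inv_mul_cancel₀ hPpos.ne'
      nlinarith
    have hc2 : c ^ 2 ≤ 1 := by nlinarith
    have h5 : 1 - P⁻¹ ≤ P - 1 := by linarith
    have h6 : c ^ 2 * (1 - P⁻¹) ≤ 1 * (1 - P⁻¹) :=
      mul_le_mul_of_nonneg_right hc2 (by linarith)
    nlinarith
  have hden : 1 - c ^ 2 * P⁻¹ ≤ D * t ^ 2 := by
    have : P - c ^ 2 ≤ D * t ^ 2 := by rw [hDdef]; nlinarith
    linarith
  have hdenpos : 0 < Real.sqrt (1 - c ^ 2 * (Real.cosh t) ^ ((4:ℝ) - 2*n)) :=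
    Real.sqrt_pos.2 (lt_of_lt_of_le (bar_eps_pos hc1 hc0) (bar_den_lb hn hc1 hc0 t))
  have hsd : Real.sqrt (1 - c ^ 2 * P⁻¹) ≤ Real.sqrt D * t := by
    calc Real.sqrt (1 - c ^ 2 * P⁻¹) ≤ Real.sqrt (D * t ^ 2) := Real.sqrt_le_sqrt hden
      _ = Real.sqrt D * t := by
          rw [Real.sqrt_mul hDpos.le, Real.sqrt_sq htpos.le]
  have hcosh3 : Real.cosh t ≤ 3 := by
    calc Real.cosh t ≤ Real.cosh 1 := by
          rw [Real.cosh_le_cosh]; rw [abs_of_nonneg htpos.le, abs_one]; exact ht1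
      _ ≤ 3 := by
          rw [Real.cosh_eq]
          have h1 := Real.exp_one_lt_d9
          have h2 : Real.exp (-1) ≤ 1 := Real.exp_le_one_iff.2 (by norm_num)
          linarith
  have hnum : (3:ℝ) ^ ((2:ℝ) - n) ≤ (Real.cosh t) ^ ((2:ℝ) - n) :=
    Real.rpow_le_rpow_of_nonpos (Real.cosh_pos t) hcosh3 (by linarith)
  show _ ≤ (Real.cosh t) ^ ((2:ℝ) - n) / Real.sqrt (1 - c ^ 2 * (Real.cosh t) ^ ((4:ℝ) - 2*n))
  rw [div_div]
  apply div_le_div₀ (Real.rpow_nonneg (Real.cosh_pos t).le _) hnum hdenpos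
  rw [hX]
  exact hsd

private lemma bar_key {n : ℕ} (hn : 4 ≤ n) {c : ℝ} (hc1 : c < 1) (hc2 : 1/2 < c) :
    ((3 : ℝ) ^ ((2:ℝ) - n) / Real.sqrt (5 * (2*n-4 : ℕ) * Real.exp (5 * (2*n-4 : ℕ)) + 1))
      * (- Real.log (Real.sqrt (1 - c ^ 2))) ≤ ∫ t in Set.Ioi 0, barF c n t := by
  have hc0 : 0 < c := by linarith
  set K : ℝ := (3 : ℝ) ^ ((2:ℝ) - n) /
    Real.sqrt (5 * (2*n-4 : ℕ) * Real.exp (5 * (2*n-4 : ℕ)) + 1) with hKdef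
  have hKpos : 0 < K := by
    apply div_pos (Real.rpow_pos_of_pos (by norm_num) _)
    apply Real.sqrt_pos.2
    positivity
  set a : ℝ := Real.sqrt (1 - c ^ 2) with hadef
  have hapos : 0 < a := Real.sqrt_pos.2 (bar_eps_pos hc1 hc0)
  have ha1 : a < 1 := by
    rw [hadef]
    exact (Real.sqrt_lt' one_pos).2 (by nlinarith)
  have hIf : IntegrableOn (fun t => K / t) (Set.Ioc a 1) := by
    apply (ContinuousOn.integrableOn_Icc ?_).mono_set Set.Ioc_subset_Icc_self
    apply continuousOn_const.div continuousOn_id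
    intro t ht
    exact (lt_of_lt_of_le hapos ht.1).ne'
  have hIF : IntegrableOn (barF c n) (Set.Ioc a 1) :=
    (bar_integrable hn hc1 hc0 a).mono_set Set.Ioc_subset_Ioi_self
  have h1 : ∫ t in Set.Ioc a 1, K / t ≤ ∫ t in Set.Ioc a 1, barF c n t := by
    apply MeasureTheory.setIntegral_mono_on hIf hIF measurableSet_Ioc
    intro t ht
    exact bar_lb hn hc1 hc0 ht.2 ht.1
  have h2 : ∫ t in Set.Ioc a 1, barF c n t ≤ ∫ t in Set.Ioi 0, barF c n t := by
    apply MeasureTheory.setIntegral_mono_set (bar_integrable hn hc1 hc0 0)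
      (Filter.Eventually.of_forall fun t => (bar_pos hn hc1 hc0 t).le)
    apply HasSubset.Subset.eventuallyLE
    intro t ht
    exact lt_of_le_of_lt hapos.le ht.1
  have h3 : ∫ t in Set.Ioc a 1, K / t = K * (- Real.log a) := by
    rw [← intervalIntegral.integral_of_le ha1.le]
    simp only [div_eq_mul_inv]
    rw [intervalIntegral.integral_const_mul,
      integral_inv (Set.notMem_uIcc_of_lt hapos one_pos)]
    rw [Real.log_div one_ne_zero hapos.ne', Real.log_one]
    ring
  calc K * (- Real.log a) = ∫ t in Set.Ioc a 1, K / t := h3.symm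
    _ ≤ ∫ t in Set.Ioc a 1, barF c n t := h1
    _ ≤ ∫ t in Set.Ioi 0, barF c n t := h2

/-- Properties of the barrier function
`g_c(s) = c ∫ₛ^∞ (cosh t)^{2−n}(1 − c²(cosh t)^{4−2n})^{−1/2} dt`, `0 < c < 1`, `n ≥ 4`:
(i) the integrand is integrable on `(s,∞)` for every `s > 0` (it decays like
`e^{(2−n)t}`), so `g_c` is well defined and finite; (ii) `g_c` is strictly decreasing
on `(0,∞)` and `g_c(s) → 0` as `s → ∞`; (iii) `g_c(0) → +∞` as `c → 1⁻`. -/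
theorem stmt_16 {n : ℕ} (hn : 4 ≤ n)
    (g : ℝ → ℝ → ℝ)
    (hg : ∀ c s, g c s = c * ∫ t in Set.Ioi s,
      (Real.cosh t) ^ ((2:ℝ) - n) / Real.sqrt (1 - c ^ 2 * (Real.cosh t) ^ ((4:ℝ) - 2*n))) :
    (∀ c : ℝ, 0 < c → c < 1 → ∀ s > (0:ℝ), MeasureTheory.IntegrableOn
      (fun t => (Real.cosh t) ^ ((2:ℝ) - n) /
        Real.sqrt (1 - c ^ 2 * (Real.cosh t) ^ ((4:ℝ) - 2*n))) (Set.Ioi s)) ∧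
    (∀ c : ℝ, 0 < c → c < 1 →
      StrictAntiOn (g c) (Set.Ioi 0) ∧ Tendsto (g c) atTop (nhds 0)) ∧
    Tendsto (fun c => g c 0) (nhdsWithin 1 (Set.Iio 1)) atTop := by
  refine ⟨fun c hc0 hc1 s _ => bar_integrable hn hc1 hc0 s, fun c hc0 hc1 => ?_, ?_⟩
  · have hg' : ∀ s, g c s = c * ∫ t in Set.Ioi s, barF c n t := fun s => hg c s
    constructor
    · intro x _ y _ hxy
      rw [hg' x, hg' y]
      apply mul_lt_mul_of_pos_left _ hc0
      rw [bar_split hn hc1 hc0 hxy.le]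
      have := bar_int_pos hn hc1 hc0 hxy
      linarith
    · exact (bar_tendsto_zero hn hc1 hc0).congr (fun s => (hg' s).symm)
  · set K : ℝ := (3 : ℝ) ^ ((2:ℝ) - n) /
      Real.sqrt (5 * (2*n-4 : ℕ) * Real.exp (5 * (2*n-4 : ℕ)) + 1) with hKdef
    have hKpos : 0 < K := by
      apply div_pos (Real.rpow_pos_of_pos (by norm_num) _)
      apply Real.sqrt_pos.2
      positivity
    have hmem : Set.Ioo (1/2 : ℝ) 1 ∈ nhdsWithin 1 (Set.Iio 1) :=
      Ioo_mem_nhdsLT_of_mem (by constructor <;> norm_num)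
    have t1 : Tendsto (fun c : ℝ => Real.sqrt (1 - c ^ 2)) (nhdsWithin 1 (Set.Iio 1))
        (nhdsWithin 0 (Set.Ioi 0)) := by
      apply tendsto_nhdsWithin_of_tendsto_nhds_of_eventually_within
      · have hcont : Continuous fun c : ℝ => Real.sqrt (1 - c ^ 2) :=
          (continuous_const.sub (continuous_pow 2)).sqrt
        have h := (hcont.tendsto 1).mono_left
          (nhdsWithin_le_nhds (s := Set.Iio (1:ℝ)))
        simpa using h
      · filter_upwards [hmem] with c hc
        exact Real.sqrt_pos.2 (by nlinarith [hc.1, hc.2])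
    have t3 : Tendsto (fun c : ℝ => -Real.log (Real.sqrt (1 - c ^ 2)))
        (nhdsWithin 1 (Set.Iio 1)) atTop :=
      tendsto_neg_atBot_atTop.comp (Real.tendsto_log_nhdsGT_zero.comp t1)
    have t4 : Tendsto (fun c : ℝ => (1/2 : ℝ) * (K * (-Real.log (Real.sqrt (1 - c ^ 2)))))
        (nhdsWithin 1 (Set.Iio 1)) atTop :=
      Tendsto.const_mul_atTop (by norm_num) (Tendsto.const_mul_atTop hKpos t3)
    apply tendsto_atTop_mono' _ ?_ t4
    filter_upwards [hmem] with c hc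
    have hc0 : 0 < c := by linarith [hc.1]
    have hc1 : c < 1 := hc.2
    have hkey := bar_key hn hc1 hc.1
    have hlog : 0 ≤ -Real.log (Real.sqrt (1 - c ^ 2)) := by
      rw [neg_nonneg]
      apply Real.log_nonpos (Real.sqrt_nonneg _)
      exact Real.sqrt_le_one.2 (by nlinarith)
    have hg0 : g c 0 = c * ∫ t in Set.Ioi 0, barF c n t := hg c 0
    rw [hg0]
    have hKL : 0 ≤ K * (-Real.log (Real.sqrt (1 - c ^ 2))) := mul_nonneg hKpos.le hlog
    calc (1/2 : ℝ) * (K * (-Real.log (Real.sqrt (1 - c ^ 2))))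
        ≤ c * (K * (-Real.log (Real.sqrt (1 - c ^ 2)))) :=
          mul_le_mul_of_nonneg_right (by linarith [hc.1]) hKL
      _ ≤ c * ∫ t in Set.Ioi 0, barF c n t :=
          mul_le_mul_of_nonneg_left hkey hc0.le
end
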